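/- arXiv:2003.10559 — 6 statements merged into one kernel-verified Lean document; each statement's English description precedes it below -/
import Mathlib

section
/- For the dephasing Kraus family and derivative family with 0 < p < 1 and reals φ, ṗ, φ̇, the infimum over 2×2 Hermitian matrices h of 4‖α(h)‖ equals (1−2p)² φ̇² + ṗ²/(p(1−p)), and this infimum is attained. -/
/-!
Every Kraus operator of the dephasing channel, and every derivative, is diagonal and carries the
common phase `diag(e^{-iφ/2}, e^{iφ/2})`. Hence `α(h)` is diagonal, the phase drops out of it, and
`‖α(h)‖` is the larger of its two diagonal entries, which are explicit sums of squares in the real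
coordinates `h = [[x, u + iv], [u - iv, y]]`. Twice their sum is the claimed value plus
`4((u + √(p(1-p)) φ̇)² + v² + (1-p)x² + py²)`, and `4 max ≥ 2 sum`; at `x = y = v = 0`,
`u = -√(p(1-p)) φ̇` the squares vanish and the two entries coincide, so equality holds.
-/

open Matrix

/-- The ℓ²→ℓ² operator norm (largest singular value) of a complex matrix. -/
noncomputable def opNorm {m n : Type*} [Fintype m] [Fintype n] [DecidableEq n]
    (A : Matrix m n ℂ) : ℝ :=
  ‖LinearMap.toContinuousLinearMap (Matrix.toEuclideanLin A)‖

/-- `α(h) = ∑_i (K̇_i − i ∑_j h_{ij} K_j)† (K̇_i − i ∑_j h_{ij} K_j)`. -/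
noncomputable def krausAlpha {d d' r : ℕ} (K Kd : Fin r → Matrix (Fin d') (Fin d) ℂ)
    (h : Matrix (Fin r) (Fin r) ℂ) : Matrix (Fin d) (Fin d) ℂ :=
  ∑ i, (Kd i - Complex.I • ∑ j, h i j • K j)ᴴ * (Kd i - Complex.I • ∑ j, h i j • K j)

/-- `diag(e^{−iφ/2}, e^{iφ/2})`. -/
noncomputable def Dplus (φ : ℝ) : Matrix (Fin 2) (Fin 2) ℂ :=
  !![Complex.exp (-(Complex.I * φ / 2)), 0; 0, Complex.exp (Complex.I * φ / 2)]

/-- `diag(e^{−iφ/2}, −e^{iφ/2})`. -/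
noncomputable def Dminus (φ : ℝ) : Matrix (Fin 2) (Fin 2) ℂ :=
  !![Complex.exp (-(Complex.I * φ / 2)), 0; 0, -Complex.exp (Complex.I * φ / 2)]

/-- The dephasing Kraus family `K₁ = √(1−p)·diag(e^{−iφ/2}, e^{iφ/2})`,
`K₂ = √p·diag(e^{−iφ/2}, −e^{iφ/2})`. -/
noncomputable def dephK (p φ : ℝ) : Fin 2 → Matrix (Fin 2) (Fin 2) ℂ :=
  ![(Real.sqrt (1 - p) : ℂ) • Dplus φ, (Real.sqrt p : ℂ) • Dminus φ]

/-- The derivative family of the dephasing Kraus family, where `ṗ`, `φ̇` are the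
derivatives of `p`, `φ` with respect to the unknown parameter. -/
noncomputable def dephKdot (p φ pd φd : ℝ) : Fin 2 → Matrix (Fin 2) (Fin 2) ℂ :=
  ![((-pd / (2 * Real.sqrt (1 - p)) : ℝ) : ℂ) • Dplus φ -
      (Complex.I * (Real.sqrt (1 - p) * φd / 2)) • Dminus φ,
    ((pd / (2 * Real.sqrt p) : ℝ) : ℂ) • Dminus φ -
      (Complex.I * (Real.sqrt p * φd / 2)) • Dplus φ]

open Complex

theorem opNorm_diagonal_ofReal {n : Type*} [Fintype n] [DecidableEq n] (f : n → ℝ) :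
    opNorm (diagonal fun c => (f c : ℂ)) = ‖f‖ := by
  open scoped Matrix.Norms.L2Operator in
  change ‖(diagonal fun c => (f c : ℂ))‖ = ‖f‖
  rw [l2_opNorm_diagonal]
  simp [Pi.norm_def]

theorem Pi.norm_fin_two {E : Type*} [SeminormedAddCommGroup E] (f : Fin 2 → E) :
    ‖f‖ = max ‖f 0‖ ‖f 1‖ := by
  refine le_antisymm ((pi_norm_le_iff_of_nonneg (by positivity)).2 fun c => ?_)
    (max_le (norm_le_pi_norm f 0) (norm_le_pi_norm f 1))
  fin_cases c
  exacts [le_max_left _ _, le_max_right _ _]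

theorem Matrix.isHermitian_fin_two_iff {h : Matrix (Fin 2) (Fin 2) ℂ} :
    h.IsHermitian ↔ ∃ x y u v : ℝ, h = !![(x : ℂ), u + v * I; u - v * I, y] := by
  constructor
  · intro hh
    refine ⟨(h 0 0).re, (h 1 1).re, (h 0 1).re, (h 0 1).im, ?_⟩
    have hdiag (i : Fin 2) : (h i i).im = 0 := conj_eq_iff_im.mp (hh.apply i i)
    have h10 : h 1 0 = star (h 0 1) := (hh.apply 1 0).symm
    ext i j; fin_cases i <;> fin_cases j <;> apply Complex.ext <;> simp [h10, hdiag]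
  · rintro ⟨x, y, u, v, rfl⟩
    ext i j; fin_cases i <;> fin_cases j <;> simp [sub_eq_add_neg]

section DiagonalKraus

variable {d r : ℕ}

theorem krausAlpha_diagonal (k kd : Fin r → Fin d → ℂ) (h : Matrix (Fin r) (Fin r) ℂ) :
    krausAlpha (fun i => diagonal (k i)) (fun i => diagonal (kd i)) h =
      diagonal fun c => ((∑ i, ‖kd i c - I * ∑ j, h i j * k j c‖ ^ 2 : ℝ) : ℂ) := by
  have hterm (i : Fin r) : diagonal (kd i) - I • ∑ j, h i j • diagonal (k j) =
      diagonal fun c => kd i c - I * ∑ j, h i j * k j c := by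
    ext c c'
    rcases eq_or_ne c c' with rfl | hcc'
    · simp [Matrix.sum_apply]
    · simp [Matrix.sum_apply, diagonal_apply_ne _ hcc']
  simp only [krausAlpha, hterm, diagonal_conjTranspose, diagonal_mul_diagonal]
  ext c c'
  rcases eq_or_ne c c' with rfl | hcc'
  · simp only [Matrix.sum_apply, diagonal_apply_eq, Pi.star_apply, RCLike.star_def, conj_mul',
      ofReal_sum, ofReal_pow]
  · simp [Matrix.sum_apply, diagonal_apply_ne _ hcc']

theorem krausAlpha_diagonal_mul_phase (w : Fin d → ℂ) (hw : ∀ c, ‖w c‖ = 1)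
    (k kd : Fin r → Fin d → ℂ) (h : Matrix (Fin r) (Fin r) ℂ) :
    krausAlpha (fun i => diagonal fun c => w c * k i c)
        (fun i => diagonal fun c => w c * kd i c) h =
      krausAlpha (fun i => diagonal (k i)) (fun i => diagonal (kd i)) h := by
  simp only [krausAlpha_diagonal]
  refine congrArg diagonal (funext fun c => congrArg _ (Finset.sum_congr rfl fun i _ => ?_))
  have hfactor : w c * kd i c - I * ∑ j, h i j * (w c * k j c) =
      w c * (kd i c - I * ∑ j, h i j * k j c) := by
    simp only [Finset.mul_sum, mul_sub]
    congr 1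
    exact Finset.sum_congr rfl fun j _ => by ring
  rw [hfactor, norm_mul, hw, one_mul]

end DiagonalKraus

section DephasingFamily

variable (s t a b φd : ℝ)

/-- The diagonal of `α(h)` computed in `krausAlpha_dephasing_family`; the dephasing channel is the
case `s = √(1-p)`, `t = √p`, `a = -ṗ/(2s)`, `b = ṗ/(2t)`. -/
noncomputable def dephAlphaDiag (x y u v : ℝ) : Fin 2 → ℝ :=
  ![(a + v * t) ^ 2 + (x * s + s * φd / 2 + u * t) ^ 2 + (b - v * s) ^ 2
      + (t * φd / 2 + u * s + y * t) ^ 2,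
    (a - v * t) ^ 2 + (x * s - s * φd / 2 - u * t) ^ 2 + (b + v * s) ^ 2
      + (t * φd / 2 + u * s - y * t) ^ 2]

theorem krausAlpha_dephasing_family (φ x y u v : ℝ) :
    krausAlpha ![(s : ℂ) • Dplus φ, (t : ℂ) • Dminus φ]
      ![(a : ℂ) • Dplus φ - (I * (s * φd / 2)) • Dminus φ,
        (b : ℂ) • Dminus φ - (I * (t * φd / 2)) • Dplus φ]
      !![(x : ℂ), u + v * I; u - v * I, y] =
    diagonal fun c => (dephAlphaDiag s t a b φd x y u v c : ℂ) := by
  set w : Fin 2 → ℂ := ![exp (-(I * φ / 2)), exp (I * φ / 2)]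
  have hw (c : Fin 2) : ‖w c‖ = 1 := by fin_cases c <;> simp [w, norm_exp]
  have hK : ![(s : ℂ) • Dplus φ, (t : ℂ) • Dminus φ] =
      fun i => diagonal fun c => w c * ![![(s : ℂ), s], ![(t : ℂ), -t]] i c := by
    funext i; ext c c'
    fin_cases i <;> fin_cases c <;> fin_cases c' <;> simp [w, Dplus, Dminus, mul_comm]
  have hKd : ![(a : ℂ) • Dplus φ - (I * (s * φd / 2)) • Dminus φ,
        (b : ℂ) • Dminus φ - (I * (t * φd / 2)) • Dplus φ] =
      fun i => diagonal fun c => w c * ![![a - I * (s * φd / 2), a + I * (s * φd / 2)],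
        ![b - I * (t * φd / 2), -b - I * (t * φd / 2)]] i c := by
    funext i; ext c c'
    fin_cases i <;> fin_cases c <;> fin_cases c' <;> simp [w, Dplus, Dminus] <;> ring
  rw [hK, hKd, krausAlpha_diagonal_mul_phase w hw, krausAlpha_diagonal]
  refine congrArg diagonal (funext fun c => congrArg _ ?_)
  fin_cases c <;> simp [Fin.sum_univ_two, Complex.sq_norm, normSq_apply, dephAlphaDiag] <;> ring

theorem dephAlphaDiag_nonneg (x y u v : ℝ) (c : Fin 2) :
    0 ≤ dephAlphaDiag s t a b φd x y u v c := by
  fin_cases c <;> simp [dephAlphaDiag] <;> positivity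

theorem opNorm_krausAlpha_dephasing_family (φ x y u v : ℝ) :
    opNorm (krausAlpha ![(s : ℂ) • Dplus φ, (t : ℂ) • Dminus φ]
      ![(a : ℂ) • Dplus φ - (I * (s * φd / 2)) • Dminus φ,
        (b : ℂ) • Dminus φ - (I * (t * φd / 2)) • Dplus φ]
      !![(x : ℂ), u + v * I; u - v * I, y]) =
    max (dephAlphaDiag s t a b φd x y u v 0) (dephAlphaDiag s t a b φd x y u v 1) := by
  rw [krausAlpha_dephasing_family, opNorm_diagonal_ofReal, Pi.norm_fin_two,
    Real.norm_of_nonneg (dephAlphaDiag_nonneg ..), Real.norm_of_nonneg (dephAlphaDiag_nonneg ..)]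

theorem two_mul_dephAlphaDiag_add (hst : s ^ 2 + t ^ 2 = 1) (x y u v : ℝ) :
    2 * (dephAlphaDiag s t a b φd x y u v 0 + dephAlphaDiag s t a b φd x y u v 1) =
      4 * (a ^ 2 + b ^ 2) + (s ^ 2 - t ^ 2) ^ 2 * φd ^ 2
        + 4 * ((u + s * t * φd) ^ 2 + v ^ 2 + (x * s) ^ 2 + (y * t) ^ 2) := by
  simp only [dephAlphaDiag, Matrix.cons_val_zero, Matrix.cons_val_one]
  linear_combination (4 * u ^ 2 + 4 * v ^ 2 - φd ^ 2 * (s ^ 2 + t ^ 2)) * hst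

end DephasingFamily

/-- For the dephasing channel with `0 < p < 1`, the infimum over Hermitian `h` of
`4‖α(h)‖` equals `(1−2p)² φ̇² + ṗ²/(p(1−p))`, and it is attained. -/
theorem dephasing_single_channel_QFI (p φ pd φd : ℝ) (hp0 : 0 < p) (hp1 : p < 1) :
    IsLeast
      {x : ℝ | ∃ h : Matrix (Fin 2) (Fin 2) ℂ, h.IsHermitian ∧
        x = 4 * opNorm (krausAlpha (dephK p φ) (dephKdot p φ pd φd) h)}
      ((1 - 2 * p) ^ 2 * φd ^ 2 + pd ^ 2 / (p * (1 - p))) := by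
  set s := √(1 - p)
  set t := √p
  have hs2 : s ^ 2 = 1 - p := Real.sq_sqrt (by linarith)
  have ht2 : t ^ 2 = p := Real.sq_sqrt hp0.le
  set a := -pd / (2 * s)
  set b := pd / (2 * t)
  set F := dephAlphaDiag s t a b φd
  have hα (x y u v : ℝ) : opNorm (krausAlpha (dephK p φ) (dephKdot p φ pd φd)
      !![(x : ℂ), u + v * I; u - v * I, y]) = max (F x y u v 0) (F x y u v 1) :=
    opNorm_krausAlpha_dephasing_family s t a b φd φ x y u v
  have hsum := two_mul_dephAlphaDiag_add s t a b φd (by rw [hs2, ht2]; ring)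
  have hM : 4 * (a ^ 2 + b ^ 2) + (s ^ 2 - t ^ 2) ^ 2 * φd ^ 2 =
      (1 - 2 * p) ^ 2 * φd ^ 2 + pd ^ 2 / (p * (1 - p)) := by
    have : 1 - p ≠ 0 := by linarith
    simp only [a, b, div_pow, mul_pow, hs2, ht2]
    field_simp
    ring
  refine ⟨⟨_, isHermitian_fin_two_iff.2 ⟨0, 0, -(s * t * φd), 0, rfl⟩, ?_⟩, ?_⟩
  · have hF : F 0 0 (-(s * t * φd)) 0 0 = F 0 0 (-(s * t * φd)) 0 1 := by
      simp only [F, dephAlphaDiag, Matrix.cons_val_zero, Matrix.cons_val_one]; ring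
    rw [hα, ← hF, max_self]
    linarith [hsum 0 0 (-(s * t * φd)) 0]
  · rintro _ ⟨h, hh, rfl⟩
    obtain ⟨x, y, u, v, rfl⟩ := isHermitian_fin_two_iff.1 hh
    rw [hα]
    have hsq : 0 ≤ (u + s * t * φd) ^ 2 + v ^ 2 + (x * s) ^ 2 + (y * t) ^ 2 := by positivity
    linarith [hsum x y u v, le_max_left (F x y u v 0) (F x y u v 1),
      le_max_right (F x y u v 0) (F x y u v 1)]
end

section
/- Let H be a Hermitian d×d complex matrix and let 𝒮 be a real-linear subspace of the real vector space of Hermitian d×d matrices. Then sup{ |Tr(H C̃)| : C̃ Hermitian, ‖C̃‖₁ ≤ 2, and Tr(C̃ S) = 0 for all S ∈ 𝒮 } = 2 · inf{ ‖H − S‖ : S ∈ 𝒮 }, where ‖·‖₁ is the trace norm (sum of absolute values of the eigenvalues for a Hermitian matrix) and ‖·‖ is the operator norm; moreover both the supremum and the infimum are attained. -/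
open Matrix

/-- The trace norm of a Hermitian matrix: the sum of the absolute values of its
eigenvalues. -/
noncomputable def traceNormOfHermitian {d : ℕ} {A : Matrix (Fin d) (Fin d) ℂ}
    (hA : A.IsHermitian) : ℝ :=
  ∑ i, |hA.eigenvalues i|

/-!
Weak duality is Hölder's inequality `|Tr(A C)| ≤ ‖A‖ ‖C‖₁`, applied to `A = H - S₀` for a nearest
point `S₀ ∈ 𝒮`. For the converse, Hahn–Banach in `Mat ⧸ 𝒮`, whose quotient norm is the distance to
`𝒮`, gives a real functional of norm `≤ 1` that vanishes on `𝒮` and takes the value `dist(H, 𝒮)`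
at `H`. On Hermitian matrices it is `A ↦ Tr(C A)` for a Hermitian `C`, and evaluating it at the
sign of `C` (a Hermitian contraction) shows `‖C‖₁ ≤ 1`.
-/

open scoped Matrix.Norms.L2Operator

theorem Submodule.exists_strongDual_apply_eq_infDist {𝕜 E : Type*} [RCLike 𝕜]
    [SeminormedAddCommGroup E] [NormedSpace 𝕜 E] (K : Submodule 𝕜 E) (x : E) :
    ∃ g : StrongDual 𝕜 E, ‖g‖ ≤ 1 ∧ (∀ y ∈ K, g y = 0) ∧ g x = Metric.infDist x K := by
  obtain ⟨g, hg, hgx⟩ := exists_dual_vector'' 𝕜 (K.mkQ x)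
  refine ⟨g.comp K.mkQL, ?_, fun y hy => ?_, ?_⟩
  · refine (g.opNorm_comp_le _).trans (mul_le_one₀ hg (norm_nonneg _) ?_)
    exact K.mkQL.opNorm_le_bound zero_le_one fun y =>
      (one_mul ‖y‖).symm ▸ Submodule.Quotient.norm_mk_le K y
  · simp [(Submodule.Quotient.mk_eq_zero K).mpr hy]
  · exact hgx.trans (congrArg _ (QuotientAddGroup.norm_mk (S := K.toAddSubgroup) x))

namespace Matrix

theorem exists_trace_mul_eq {n R : Type*} [Fintype n] [DecidableEq n] [CommSemiring R]
    (f : Module.Dual R (Matrix n n R)) : ∃ C : Matrix n n R, ∀ X, f X = (C * X).trace := by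
  refine ⟨of fun j i => f (single i j 1), fun X => ?_⟩
  conv_lhs => rw [matrix_eq_sum_single X]
  simp only [map_sum, trace, diag, mul_apply, of_apply]
  rw [Finset.sum_comm]
  refine Finset.sum_congr rfl fun i _ => Finset.sum_congr rfl fun j _ => ?_
  have : single j i (X j i) = X j i • single j i (1 : R) := by
    rw [smul_single, smul_eq_mul, mul_one]
  rw [this, map_smul, smul_eq_mul, mul_comm]

variable {m n 𝕜 : Type*} [Fintype m] [Fintype n] [DecidableEq n] [RCLike 𝕜]

theorem exists_isHermitian_trace_mul_eq (g : Module.Dual ℝ (Matrix n n 𝕜)) :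
    ∃ C : Matrix n n 𝕜, C.IsHermitian ∧
      ∀ A : Matrix n n 𝕜, A.IsHermitian → (C * A).trace = g A := by
  obtain ⟨C, hC⟩ := exists_trace_mul_eq (g.extendRCLike (𝕜 := 𝕜))
  refine ⟨(2⁻¹ : ℝ) • (C + Cᴴ), (isHermitian_add_transpose_self C).smul (IsSelfAdjoint.all _),
    fun A hA => ?_⟩
  have hconj : (Cᴴ * A).trace = star (C * A).trace := by
    rw [← hA.eq, ← conjTranspose_mul, trace_conjTranspose, hA.eq, trace_mul_comm]
  rw [smul_mul, add_mul, trace_smul, trace_add, hconj, ← hC, RCLike.star_def, RCLike.add_conj,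
    Module.Dual.re_extendRCLike_apply, RCLike.real_smul_eq_coe_mul, ← mul_assoc, RCLike.ofReal_inv,
    RCLike.ofReal_ofNat, inv_mul_cancel₀ two_ne_zero, one_mul]

theorem norm_apply_le_l2_opNorm (A : Matrix m n 𝕜) (i : m) (j : n) : ‖A i j‖ ≤ ‖A‖ := by
  have h_apply := PiLp.norm_apply_le ((EuclideanSpace.equiv m 𝕜).symm (A *ᵥ Pi.single j 1)) i
  have h_mulVec := l2_opNorm_mulVec A (EuclideanSpace.single j (1 : 𝕜))
  simp only [mulVec_single, MulOpposite.op_one, one_smul, PiLp.continuousLinearEquiv_symm_apply,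
    col_apply, PiLp.ofLp_single, PiLp.norm_single, norm_one, mul_one] at h_apply h_mulVec
  exact h_apply.trans h_mulVec

namespace IsHermitian

variable {C : Matrix n n 𝕜} (hC : C.IsHermitian)
include hC

theorem trace_mul_eq_sum (A : Matrix n n 𝕜) :
    (A * C).trace = ∑ i, (star (hC.eigenvectorUnitary : Matrix n n 𝕜) * A *
      hC.eigenvectorUnitary) i i * hC.eigenvalues i := by
  conv_lhs => rw [hC.spectral_theorem, Unitary.conjStarAlgAut_apply, ← mul_assoc,
    trace_mul_cycle, ← mul_assoc]
  simp [trace, mul_diagonal]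

theorem norm_trace_mul_le (A : Matrix n n 𝕜) :
    ‖(A * C).trace‖ ≤ ‖A‖ * ∑ i, |hC.eigenvalues i| := by
  rw [hC.trace_mul_eq_sum, Finset.mul_sum]
  refine (norm_sum_le _ _).trans (Finset.sum_le_sum fun i _ => ?_)
  rw [norm_mul, RCLike.norm_ofReal]
  gcongr
  calc _ ≤ _ := norm_apply_le_l2_opNorm _ i i
    _ = ‖A‖ := by
      rw [← Unitary.coe_star, CStarRing.norm_mul_coe_unitary, CStarRing.norm_coe_unitary_mul]

theorem exists_isHermitian_norm_le_one_trace_mul_eq :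
    ∃ P : Matrix n n 𝕜, P.IsHermitian ∧ ‖P‖ ≤ 1 ∧ (P * C).trace = ∑ i, |hC.eigenvalues i| := by
  obtain ⟨s, hs_le, hs_mul⟩ : ∃ s : n → ℝ, (∀ i, |s i| ≤ 1) ∧
      ∀ i, s i * hC.eigenvalues i = |hC.eigenvalues i| := by
    refine ⟨fun i => SignType.sign (hC.eigenvalues i), fun i => ?_, fun i => sign_mul_self _⟩
    rcases lt_trichotomy (hC.eigenvalues i) 0 with h | h | h <;> simp [h]
  have hD : (diagonal (RCLike.ofReal ∘ s) : Matrix n n 𝕜).IsHermitian :=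
    isHermitian_diagonal_of_self_adjoint _ (by ext; simp)
  set U := hC.eigenvectorUnitary
  refine ⟨Unitary.conjStarAlgAut 𝕜 _ U (diagonal (RCLike.ofReal ∘ s)), hD.isSelfAdjoint.map _,
    ?_, ?_⟩
  · rw [Unitary.conjStarAlgAut_apply, ← Unitary.coe_star, CStarRing.norm_mul_coe_unitary,
      CStarRing.norm_coe_unitary_mul, l2_opNorm_diagonal]
    exact pi_norm_le_iff_of_nonneg zero_le_one |>.mpr fun i => by simpa using hs_le i
  · have hUPU : star (U : Matrix n n 𝕜) * Unitary.conjStarAlgAut 𝕜 _ U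
        (diagonal (RCLike.ofReal ∘ s)) * (U : Matrix n n 𝕜) = diagonal (RCLike.ofReal ∘ s) := by
      simp [Unitary.conjStarAlgAut_apply, mul_assoc, ← mul_assoc (star (U : Matrix n n 𝕜))]
    rw [hC.trace_mul_eq_sum, hUPU]
    simp [← hs_mul]

end IsHermitian

theorem exists_isHermitian_sum_abs_eigenvalues_le (g : Module.Dual ℝ (Matrix n n 𝕜)) {c : ℝ}
    (hg : ∀ A : Matrix n n 𝕜, A.IsHermitian → ‖A‖ ≤ 1 → g A ≤ c) :
    ∃ C : Matrix n n 𝕜, ∃ hC : C.IsHermitian, ∑ i, |hC.eigenvalues i| ≤ c ∧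
      ∀ A : Matrix n n 𝕜, A.IsHermitian → (C * A).trace = g A := by
  obtain ⟨C, hC, hCg⟩ := exists_isHermitian_trace_mul_eq g
  obtain ⟨P, hP, hP_norm, hPC⟩ := hC.exists_isHermitian_norm_le_one_trace_mul_eq
  refine ⟨C, hC, ?_, hCg⟩
  have h_eq : ∑ i, |hC.eigenvalues i| = g P := by
    exact_mod_cast (hPC.symm.trans (trace_mul_comm P C)).trans (hCg P hP)
  exact h_eq ▸ hg P hP hP_norm

end Matrix

/-- SDP duality: for Hermitian `H` and a real-linear subspace `𝒮` of Hermitian matrices,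
`max { |Tr(H C̃)| : C̃ Hermitian, ‖C̃‖₁ ≤ 2, Tr(C̃ S) = 0 ∀ S ∈ 𝒮 } = 2 · min_{S ∈ 𝒮} ‖H − S‖`,
both optima being attained. -/
theorem traceNorm_ball_duality {d : ℕ} (H : Matrix (Fin d) (Fin d) ℂ)
    (hH : H.IsHermitian) (𝒮 : Submodule ℝ (Matrix (Fin d) (Fin d) ℂ))
    (h𝒮 : ∀ S ∈ 𝒮, S.IsHermitian) :
    ∃ m : ℝ,
      IsLeast {y : ℝ | ∃ S ∈ 𝒮, y = opNorm (H - S)} m ∧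
      IsGreatest {x : ℝ | ∃ C : Matrix (Fin d) (Fin d) ℂ, ∃ hC : C.IsHermitian,
          traceNormOfHermitian hC ≤ 2 ∧ (∀ S ∈ 𝒮, (C * S).trace = 0) ∧
          x = ‖(H * C).trace‖} (2 * m) := by
  obtain ⟨S₀, hS₀, hS₀_dist⟩ :=
    𝒮.closed_of_finiteDimensional.exists_infDist_eq_dist ⟨0, 𝒮.zero_mem⟩ H
  rw [dist_eq_norm] at hS₀_dist
  obtain ⟨g, hg, hg𝒮, hgH⟩ := 𝒮.exists_strongDual_apply_eq_infDist H
  have h2g : ∀ A : Matrix (Fin d) (Fin d) ℂ, A.IsHermitian → ‖A‖ ≤ 1 → ((2 : ℝ) • g) A ≤ 2 :=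
    fun A _ hA => by
      rw [_root_.smul_apply, smul_eq_mul]
      nlinarith [(le_abs_self (g A)).trans (g.le_opNorm A), norm_nonneg g, norm_nonneg A]
  obtain ⟨C, hC, hC_norm, hCg⟩ :=
    exists_isHermitian_sum_abs_eigenvalues_le ((2 : ℝ) • g).toLinearMap h2g
  refine ⟨Metric.infDist H 𝒮, ⟨⟨S₀, hS₀, hS₀_dist⟩, ?_⟩, ⟨C, hC, hC_norm, fun S hS => ?_, ?_⟩, ?_⟩
  · rintro _ ⟨S, hS, rfl⟩
    exact (Metric.infDist_le_dist_of_mem hS).trans_eq (dist_eq_norm H S)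
  · simp [hCg S (h𝒮 S hS), hg𝒮 S hS]
  · rw [trace_mul_comm, hCg H hH]
    simp [hgH, abs_of_nonneg Metric.infDist_nonneg]
  · rintro _ ⟨C, hC, hC_norm, hC𝒮, rfl⟩
    have h_trace : (H * C).trace = ((H - S₀) * C).trace := by
      rw [sub_mul, trace_sub, trace_mul_comm S₀, hC𝒮 S₀ hS₀, sub_zero]
    calc ‖(H * C).trace‖ ≤ ‖H - S₀‖ * traceNormOfHermitian hC :=
          h_trace ▸ hC.norm_trace_mul_le (H - S₀)
      _ ≤ Metric.infDist H 𝒮 * 2 := by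
          rw [← hS₀_dist]; gcongr; exact Metric.infDist_nonneg
      _ = 2 * Metric.infDist H 𝒮 := mul_comm _ _
end

section
/- Let K be a Kraus family with derivative family K̇, let h⋄ be an r×r Hermitian matrix, and let ρ⋄ be a d×d positive semidefinite matrix with Tr ρ⋄ = 1. Then the pair (h⋄, ρ⋄) is a saddle point of g(h, ρ) = Tr(ρ α(h)) — that is, Tr(ρ α(h⋄)) ≤ Tr(ρ⋄ α(h⋄)) ≤ Tr(ρ⋄ α(h)) for all density matrices ρ and all Hermitian h — if and only if both: (i) Tr(ρ⋄ α(h⋄)) = ‖α(h⋄)‖, and (ii) for every r×r Hermitian matrix Δh, Re Tr( ρ⋄ · ∑_{i,j} i Δh_{ij} K_i† (K̇_j − i ∑_k h⋄_{jk} K_k) ) = 0. -/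
/-!
The saddle-point inequalities decouple into a maximisation in `ρ` and a minimisation in `h`.
Since `α(h⋄) ≥ 0`, its norm is its largest eigenvalue, so `α(h⋄) ≤ ‖α(h⋄)‖ • 1` gives
`Re Tr(ρ α(h⋄)) ≤ ‖α(h⋄)‖` for every density matrix `ρ`, with equality at the projection onto a
corresponding eigenvector. In `h`, `t ↦ Re Tr(ρ⋄ α(h⋄ + t Δh))` is the real quadratic
`g + 2 t L(Δh) + t² Q(Δh)`, where `L` is the left side of (ii) and `Q(Δh) = Re Tr(ρ⋄ α₀(Δh)) ≥ 0`
with `α₀` the `α` of `K̇ = 0`; such a quadratic is minimal at `t = 0` iff `L(Δh) = 0`.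
-/

open Matrix
open scoped ComplexOrder

namespace Matrix

lemma PosSemidef.trace_mul_nonneg {n 𝕜 : Type*} [Fintype n] [DecidableEq n] [RCLike 𝕜]
    {A B : Matrix n n 𝕜} (hA : A.PosSemidef) (hB : B.PosSemidef) : 0 ≤ (A * B).trace := by
  open scoped MatrixOrder Norms.L2Operator in
  obtain ⟨C, rfl⟩ := CStarAlgebra.nonneg_iff_eq_star_mul_self.mp hB.nonneg
  rw [star_eq_conjTranspose, ← Matrix.mul_assoc, trace_mul_cycle]
  exact (hA.mul_mul_conjTranspose_same C).trace_nonneg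

section L2OpNorm

open scoped MatrixOrder Norms.L2Operator

variable {n : Type*} [Fintype n] [DecidableEq n]

lemma opNorm_eq_l2_opNorm {m : Type*} [Fintype m] (A : Matrix m n ℂ) : opNorm A = ‖A‖ := rfl

lemma IsHermitian.re_trace_mul_le_norm_mul {ρ A : Matrix n n ℂ} (hρ : ρ.PosSemidef)
    (hA : A.IsHermitian) : (ρ * A).trace.re ≤ ‖A‖ * ρ.trace.re := by
  have hle : (algebraMap ℝ (Matrix n n ℂ) ‖A‖ - A).PosSemidef :=
    le_iff.mp hA.isSelfAdjoint.le_algebraMap_norm_self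
  have := (Complex.nonneg_iff.mp (hρ.trace_mul_nonneg hle)).1
  rw [Algebra.algebraMap_eq_smul_one, Matrix.mul_sub, trace_sub, mul_smul_comm, mul_one,
    trace_smul, Complex.sub_re, Complex.smul_re, smul_eq_mul] at this
  linarith

lemma PosSemidef.exists_re_trace_mul_eq_norm [Nonempty n] {A : Matrix n n ℂ}
    (hA : A.PosSemidef) :
    ∃ ρ : Matrix n n ℂ, ρ.PosSemidef ∧ ρ.trace = 1 ∧ (ρ * A).trace.re = ‖A‖ := by
  have hmem : ‖A‖ ∈ spectrum ℝ A := CStarAlgebra.norm_mem_spectrum_of_nonneg hA.nonneg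
  rw [hA.1.spectrum_real_eq_range_eigenvalues] at hmem
  obtain ⟨i, hi⟩ := hmem
  set v : n → ℂ := ⇑(hA.1.eigenvectorBasis i)
  have hv : v ⬝ᵥ star v = 1 :=
    inner_self_eq_one_of_norm_eq_one (hA.1.eigenvectorBasis.orthonormal.1 i)
  refine ⟨vecMulVec v (star v), posSemidef_vecMulVec_self_star v, ?_, ?_⟩
  · rw [trace_vecMulVec, hv]
  rw [trace_mul_comm, mul_vecMulVec, trace_vecMulVec, hA.1.mulVec_eigenvectorBasis, hi,
    smul_dotProduct, hv]
  simp

lemma PosSemidef.forall_re_trace_mul_le_iff {A ρ₀ : Matrix n n ℂ} (hA : A.PosSemidef)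
    (hρ₀ : ρ₀.PosSemidef) (htr : ρ₀.trace = 1) :
    (∀ ρ : Matrix n n ℂ, ρ.PosSemidef → ρ.trace = 1 →
        (ρ * A).trace.re ≤ (ρ₀ * A).trace.re) ↔ (ρ₀ * A).trace.re = ‖A‖ := by
  have : Nonempty n := by
    by_contra h
    simp [not_nonempty_iff.mp h] at htr
  have hle : ∀ ρ : Matrix n n ℂ, ρ.PosSemidef → ρ.trace = 1 → (ρ * A).trace.re ≤ ‖A‖ :=
    fun ρ hρ hρtr => by simpa [hρtr] using hA.1.re_trace_mul_le_norm_mul hρ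
  refine ⟨fun hmax => (hle ρ₀ hρ₀ htr).antisymm ?_, fun heq ρ hρ hρtr => heq ▸ hle ρ hρ hρtr⟩
  obtain ⟨ρ, hρ, hρtr, hρA⟩ := hA.exists_re_trace_mul_eq_norm
  exact hρA ▸ hmax ρ hρ hρtr

end L2OpNorm

lemma re_trace_mul_add_conjTranspose {n : Type*} [Fintype n] {ρ : Matrix n n ℂ}
    (hρ : ρ.IsHermitian) (S : Matrix n n ℂ) :
    (ρ * (S + Sᴴ)).trace.re = 2 * (ρ * S).trace.re := by
  have : (ρ * Sᴴ).trace = star (ρ * S).trace := by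
    rw [← trace_conjTranspose, conjTranspose_mul, hρ.eq, trace_mul_comm]
  rw [Matrix.mul_add, trace_add, Complex.add_re, this, Complex.star_def, Complex.conj_re]
  ring

lemma sum_conjTranspose_mul_add_smul {ι m n : Type*} [Fintype ι] [Fintype m]
    (M P : ι → Matrix m n ℂ) (t : ℝ) :
    ∑ i, (M i + t • P i)ᴴ * (M i + t • P i) =
      ∑ i, (M i)ᴴ * M i + t • (∑ i, (P i)ᴴ * M i + (∑ i, (P i)ᴴ * M i)ᴴ) +
        t ^ 2 • ∑ i, (P i)ᴴ * P i := by
  have hterm : ∀ i, (M i + t • P i)ᴴ * (M i + t • P i) =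
      (M i)ᴴ * M i + t • ((P i)ᴴ * M i + ((P i)ᴴ * M i)ᴴ) + t ^ 2 • ((P i)ᴴ * P i) := fun i => by
    simp only [conjTranspose_add, conjTranspose_smul, star_trivial, Matrix.add_mul,
      Matrix.mul_add, Matrix.smul_mul, Matrix.mul_smul, conjTranspose_mul,
      conjTranspose_conjTranspose]
    module
  rw [Finset.sum_congr rfl fun i _ => hterm i, Finset.sum_add_distrib, Finset.sum_add_distrib,
    ← Finset.smul_sum, ← Finset.smul_sum, Finset.sum_add_distrib, conjTranspose_sum]

end Matrix

lemma eq_zero_of_forall_nonneg_two_mul_add_sq_mul {b c : ℝ}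
    (h : ∀ t : ℝ, 0 ≤ 2 * t * b + t ^ 2 * c) : b = 0 := by
  have key : 0 ≤ b ^ 2 * (c - 2 * (|c| + 1)) := by
    have ht := h (-b / (|c| + 1))
    have : 2 * (-b / (|c| + 1)) * b + (-b / (|c| + 1)) ^ 2 * c
        = b ^ 2 * (c - 2 * (|c| + 1)) / (|c| + 1) ^ 2 := by
      field_simp
      ring
    rwa [this, le_div_iff₀ (by positivity), zero_mul] at ht
  have hb : b ^ 2 ≤ 0 := nonpos_of_mul_nonneg_left key (by linarith [le_abs_self c, abs_nonneg c])
  exact pow_eq_zero_iff two_ne_zero |>.mp (hb.antisymm (sq_nonneg b))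

section Kraus

variable {d d' r : ℕ} (K Kd : Fin r → Matrix (Fin d') (Fin d) ℂ)

noncomputable def krausGrad (h Δ : Matrix (Fin r) (Fin r) ℂ) : Matrix (Fin d) (Fin d) ℂ :=
  ∑ i, ∑ j, (Complex.I * Δ i j) • ((K i)ᴴ * (Kd j - Complex.I • ∑ k, h j k • K k))

lemma krausAlpha_posSemidef (h : Matrix (Fin r) (Fin r) ℂ) : (krausAlpha K Kd h).PosSemidef :=
  posSemidef_sum _ fun _ _ => posSemidef_conjTranspose_mul_self _

lemma krausAlpha_add_smul {h Δ : Matrix (Fin r) (Fin r) ℂ} (hΔ : Δ.IsHermitian) (t : ℝ) :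
    krausAlpha K Kd (h + t • Δ) = krausAlpha K Kd h +
      t • (krausGrad K Kd h Δ + (krausGrad K Kd h Δ)ᴴ) + t ^ 2 • krausAlpha K 0 Δ := by
  set M := fun i => Kd i - Complex.I • ∑ j, h i j • K j
  set P := fun i => (0 : Matrix (Fin d') (Fin d) ℂ) - Complex.I • ∑ j, Δ i j • K j
  have hrow : ∀ i, Kd i - Complex.I • ∑ j, (h + t • Δ) i j • K j = M i + t • P i := fun i => by
    simp only [M, P, Matrix.add_apply, Matrix.smul_apply, add_smul, Finset.sum_add_distrib,
      smul_assoc, ← Finset.smul_sum]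
    module
  have hgrad : ∑ i, (P i)ᴴ * M i = krausGrad K Kd h Δ := by
    have hP : ∀ i, (P i)ᴴ = ∑ j, (Complex.I * Δ j i) • (K j)ᴴ := fun i => by
      simp only [P, zero_sub, conjTranspose_neg, conjTranspose_smul,
        conjTranspose_sum, Finset.smul_sum, ← Finset.sum_neg_distrib, smul_smul]
      refine Finset.sum_congr rfl fun j _ => ?_
      rw [← neg_smul, star_mul', hΔ.apply j i, Complex.star_def, Complex.conj_I, neg_mul, neg_neg]
    simp only [hP, Matrix.sum_mul, Matrix.smul_mul]
    exact Finset.sum_comm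
  unfold krausAlpha
  simp_rw [hrow]
  rw [sum_conjTranspose_mul_add_smul, hgrad]
  rfl

lemma re_trace_mul_krausAlpha_add_smul {ρ h Δ : Matrix _ _ ℂ} (hρ : ρ.IsHermitian)
    (hΔ : Δ.IsHermitian) (t : ℝ) :
    (ρ * krausAlpha K Kd (h + t • Δ)).trace.re = (ρ * krausAlpha K Kd h).trace.re +
      2 * t * (ρ * krausGrad K Kd h Δ).trace.re + t ^ 2 * (ρ * krausAlpha K 0 Δ).trace.re := by
  rw [krausAlpha_add_smul K Kd hΔ, Matrix.mul_add, Matrix.mul_add, trace_add, trace_add,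
    Matrix.mul_smul, Matrix.mul_smul, trace_smul, trace_smul, Complex.add_re, Complex.add_re,
    Complex.smul_re, Complex.smul_re, re_trace_mul_add_conjTranspose hρ, smul_eq_mul,
    smul_eq_mul]
  ring

lemma forall_re_trace_mul_krausAlpha_le_iff {ρ h : Matrix _ _ ℂ} (hρ : ρ.PosSemidef)
    (hh : h.IsHermitian) :
    (∀ h' : Matrix (Fin r) (Fin r) ℂ, h'.IsHermitian →
        (ρ * krausAlpha K Kd h).trace.re ≤ (ρ * krausAlpha K Kd h').trace.re) ↔
      ∀ Δ : Matrix (Fin r) (Fin r) ℂ, Δ.IsHermitian →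
        (ρ * krausGrad K Kd h Δ).trace.re = 0 := by
  constructor
  · intro hmin Δ hΔ
    refine eq_zero_of_forall_nonneg_two_mul_add_sq_mul
      (c := (ρ * krausAlpha K 0 Δ).trace.re) fun t => ?_
    have := hmin (h + t • Δ) (hh.add (hΔ.smul (IsSelfAdjoint.all t)))
    rw [re_trace_mul_krausAlpha_add_smul K Kd hρ.1 hΔ] at this
    linarith
  · intro hgrad h' hh'
    have hQ := hρ.trace_mul_nonneg (krausAlpha_posSemidef K 0 (h' - h))
    rw [Complex.nonneg_iff] at hQ
    have := re_trace_mul_krausAlpha_add_smul K Kd (h := h) hρ.1 (hh'.sub hh) 1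
    rw [one_smul, add_sub_cancel, hgrad _ (hh'.sub hh)] at this
    linarith

end Kraus

theorem saddle_point_characterization_general {d d' r : ℕ}
    (K Kd : Fin r → Matrix (Fin d') (Fin d) ℂ)
    (hdia : Matrix (Fin r) (Fin r) ℂ) (hdiaHerm : hdia.IsHermitian)
    (ρdia : Matrix (Fin d) (Fin d) ℂ) (hρ : ρdia.PosSemidef) (hρtr : ρdia.trace = 1) :
    ((∀ ρ : Matrix (Fin d) (Fin d) ℂ, ρ.PosSemidef → ρ.trace = 1 →
        ((ρ * krausAlpha K Kd hdia).trace).re ≤ ((ρdia * krausAlpha K Kd hdia).trace).re) ∧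
      (∀ h : Matrix (Fin r) (Fin r) ℂ, h.IsHermitian →
        ((ρdia * krausAlpha K Kd hdia).trace).re ≤ ((ρdia * krausAlpha K Kd h).trace).re))
    ↔
    (((ρdia * krausAlpha K Kd hdia).trace).re = opNorm (krausAlpha K Kd hdia) ∧
      ∀ Δh : Matrix (Fin r) (Fin r) ℂ, Δh.IsHermitian →
        ((ρdia * ∑ i, ∑ j, (Complex.I * Δh i j) •
            ((K i)ᴴ * (Kd j - Complex.I • ∑ k, hdia j k • K k))).trace).re = 0) := by
  rw [opNorm_eq_l2_opNorm]
  exact and_congr ((krausAlpha_posSemidef K Kd hdia).forall_re_trace_mul_le_iff hρ hρtr)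
    (forall_re_trace_mul_krausAlpha_le_iff K Kd hρ hdiaHerm)

/-- Characterization of saddle points of `g(h,ρ) = Tr(ρ α(h))`:
`(h⋄, ρ⋄)` is a saddle point iff `Tr(ρ⋄ α(h⋄)) = ‖α(h⋄)‖` and the gradient condition
`Re Tr(ρ⋄ ∑_{i,j} i Δh_{ij} K_i†(K̇_j − i ∑_k h⋄_{jk} K_k)) = 0` holds for all
Hermitian `Δh`. -/
theorem saddle_point_characterization {d d' r : ℕ}
    (K Kd : Fin r → Matrix (Fin d') (Fin d) ℂ)
    (hK : ∑ i, (K i)ᴴ * K i = 1)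
    (hKd : ∑ i, ((Kd i)ᴴ * K i + (K i)ᴴ * Kd i) = 0)
    (hdia : Matrix (Fin r) (Fin r) ℂ) (hdiaHerm : hdia.IsHermitian)
    (ρdia : Matrix (Fin d) (Fin d) ℂ) (hρ : ρdia.PosSemidef) (hρtr : ρdia.trace = 1) :
    ((∀ ρ : Matrix (Fin d) (Fin d) ℂ, ρ.PosSemidef → ρ.trace = 1 →
        ((ρ * krausAlpha K Kd hdia).trace).re ≤ ((ρdia * krausAlpha K Kd hdia).trace).re) ∧
      (∀ h : Matrix (Fin r) (Fin r) ℂ, h.IsHermitian →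
        ((ρdia * krausAlpha K Kd hdia).trace).re ≤ ((ρdia * krausAlpha K Kd h).trace).re))
    ↔
    (((ρdia * krausAlpha K Kd hdia).trace).re = opNorm (krausAlpha K Kd hdia) ∧
      ∀ Δh : Matrix (Fin r) (Fin r) ℂ, Δh.IsHermitian →
        ((ρdia * ∑ i, ∑ j, (Complex.I * Δh i j) •
            ((K i)ᴴ * (Kd j - Complex.I • ∑ k, hdia j k • K k))).trace).re = 0) :=
  saddle_point_characterization_general K Kd hdia hdiaHerm ρdia hρ hρtr
end

section
/- Let K be a Kraus family with derivative family K̇, and let C be a d×d complex matrix such that the r×r matrix τ with entries τ_{ij} = Tr(C† K_i† K_j C) is positive definite, and such that there exists an r×r Hermitian matrix h₀ with β(h₀) = 0. Then strong Lagrangian duality holds: inf{ 4 Tr(C† α(h) C) : h Hermitian, β(h) = 0 } = sup over d×d Hermitian matrices C̃ of inf over r×r Hermitian matrices h of [ 4 Tr(C† α(h) C) + Tr( C̃ · β(h) ) ]. -/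
open Matrix
open scoped ComplexOrder

/-- `β(h) = H + ∑_{i,j} h_{ij} K_i† K_j` where `H = i ∑_i K_i† K̇_i`. -/
noncomputable def krausBeta {d d' r : ℕ} (K Kd : Fin r → Matrix (Fin d') (Fin d) ℂ)
    (h : Matrix (Fin r) (Fin r) ℂ) : Matrix (Fin d) (Fin d) ℂ :=
  (Complex.I • ∑ i, (K i)ᴴ * Kd i) + ∑ i, ∑ j, h i j • ((K i)ᴴ * K j)

/-!
The objective is `4‖u + T h‖²` for a vector `u` and a real-linear map `T` into a Euclidean
space (stack the entries of the matrices `(K̇ᵢ - i ∑ⱼ hᵢⱼ Kⱼ) C`), and the constraint is affine: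
`β(h) = β(h₀) + Λ (h - h₀)` with `Λ h = ∑ᵢⱼ hᵢⱼ Kᵢ† Kⱼ`. Projecting `u + T h₀` orthogonally onto
`T (ker Λ)` produces a feasible minimiser `h₁` whose residual `e = u + T h₁` is orthogonal to
`T (ker Λ)`. So `h ↦ 2⟪e, T h⟫` vanishes on `ker Λ` and factors through `Λ`; representing the
factor through the trace pairing on Hermitian matrices gives a Hermitian `C̃` with
`4‖u + T h‖² + Tr (C̃ β(h)) ≥ 4‖u + T h₁‖²` for every Hermitian `h`. Such a saddle point forces
the primal and the dual values to agree.
-/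

theorem Module.Dual.exists_comp_eq_of_ker_le {K V W : Type*} [Field K] [AddCommGroup V]
    [Module K V] [AddCommGroup W] [Module K W] {f : V →ₗ[K] W} {ψ : Module.Dual K V}
    (h : LinearMap.ker f ≤ LinearMap.ker ψ) : ∃ φ : Module.Dual K W, φ ∘ₗ f = ψ := by
  have : ψ ∈ LinearMap.range f.dualMap := by
    rw [LinearMap.range_dualMap_eq_dualAnnihilator_ker, Submodule.mem_dualAnnihilator]
    exact fun v hv => h hv
  exact this

section LagrangeMultiplier

variable {V W G : Type*} [AddCommGroup V] [Module ℝ V] [AddCommGroup W] [Module ℝ W]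
  [NormedAddCommGroup G] [InnerProductSpace ℝ G]

theorem exists_lagrange_multiplier_norm_sq (T : V →ₗ[ℝ] G) (Λ : V →ₗ[ℝ] W) (u : G) (x₀ : V)
    [((LinearMap.ker Λ).map T).HasOrthogonalProjection] :
    ∃ x, Λ x = Λ x₀ ∧ ∃ φ : Module.Dual ℝ W,
      ∀ y, ‖u + T x‖ ^ 2 + φ (Λ y - Λ x₀) ≤ ‖u + T y‖ ^ 2 := by
  obtain ⟨_, ⟨w, hw, rfl⟩, hperp⟩ :=
    Submodule.HasOrthogonalProjection.exists_orthogonal (K := (LinearMap.ker Λ).map T) (u + T x₀)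
  have hΛ : Λ (x₀ - w) = Λ x₀ := by rw [map_sub, LinearMap.mem_ker.mp hw, sub_zero]
  have he : u + T (x₀ - w) ∈ ((LinearMap.ker Λ).map T)ᗮ := by rwa [map_sub, ← add_sub_assoc]
  generalize x₀ - w = x at hΛ he
  obtain ⟨φ, hφ⟩ := Module.Dual.exists_comp_eq_of_ker_le (f := Λ)
    (ψ := (2 : ℝ) • (innerₗ G (u + T x) ∘ₗ T)) fun v hv => by
      simp only [LinearMap.mem_ker, LinearMap.smul_apply, LinearMap.comp_apply, innerₗ_apply_apply,
        Submodule.inner_left_of_mem_orthogonal (Submodule.mem_map_of_mem hv) he, smul_zero]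
  refine ⟨x, hΛ, φ, fun y => ?_⟩
  have hy : u + T y = (u + T x) + T (y - x) := by rw [map_sub]; abel
  have hφy : φ (Λ y - Λ x₀) = 2 * inner ℝ (u + T x) (T (y - x)) := by
    rw [← hΛ, ← map_sub, ← LinearMap.comp_apply, hφ]
    simp only [LinearMap.smul_apply, LinearMap.comp_apply, innerₗ_apply_apply, smul_eq_mul]
  rw [hy, norm_add_sq_real (u + T x), hφy]
  nlinarith [sq_nonneg ‖T (y - x)‖]

end LagrangeMultiplier

theorem sInf_eq_sSup_sInf_of_saddlePoint {ι κ : Type*} {p feasible : ι → Prop} {q : κ → Prop}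
    {f : ι → ℝ} {g : κ → ι → ℝ} {i₀ : ι} {c₀ : κ} (hi₀ : p i₀ ∧ feasible i₀) (hc₀ : q c₀)
    (hg : ∀ c i, feasible i → g c i = 0) (hsaddle : ∀ i, p i → f i₀ ≤ f i + g c₀ i)
    (hf₀ : 0 ≤ f i₀) :
    sInf {x | ∃ i, p i ∧ feasible i ∧ x = f i}
      = sSup {x | ∃ c, q c ∧ x = sInf {y | ∃ i, p i ∧ y = f i + g c i}} := by
  have hmem : ∀ c, f i₀ ∈ {y | ∃ i, p i ∧ y = f i + g c i} :=
    fun c => ⟨i₀, hi₀.1, by rw [hg c i₀ hi₀.2, add_zero]⟩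
  have hprimal : IsLeast {x | ∃ i, p i ∧ feasible i ∧ x = f i} (f i₀) := by
    refine ⟨⟨i₀, hi₀.1, hi₀.2, rfl⟩, ?_⟩
    rintro _ ⟨i, hi, hfi, rfl⟩
    simpa [hg c₀ i hfi] using hsaddle i hi
  have hdual : IsGreatest {x | ∃ c, q c ∧ x = sInf {y | ∃ i, p i ∧ y = f i + g c i}} (f i₀) := by
    refine ⟨⟨c₀, hc₀, ?_⟩, ?_⟩
    · refine (IsLeast.csInf_eq ⟨hmem c₀, ?_⟩).symm
      rintro _ ⟨i, hi, rfl⟩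
      exact hsaddle i hi
    · rintro _ ⟨c, -, rfl⟩
      -- a set unbounded below has the junk infimum `0`
      by_cases hbdd : BddBelow {y | ∃ i, p i ∧ y = f i + g c i}
      · exact csInf_le hbdd (hmem c)
      · rwa [Real.sInf_of_not_bddBelow hbdd]
  rw [hprimal.csInf_eq, hdual.csSup_eq]

namespace Matrix

variable {ι m n : Type*} [Fintype ι] [Fintype m] [Fintype n]

theorem norm_toLp_vec_sq (A : Matrix m n ℂ) :
    ‖WithLp.toLp 2 (vec A)‖ ^ 2 = (Aᴴ * A).trace.re := by
  simp only [EuclideanSpace.norm_sq_eq, ← star_vec_dotProduct_vec, dotProduct, Complex.re_sum]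
  refine Finset.sum_congr rfl fun q _ => ?_
  simp [Complex.sq_norm, Complex.normSq_apply, mul_comm]

variable (ι m n) in
noncomputable def familyToEuclidean :
    (ι → Matrix m n ℂ) →ₗ[ℂ] EuclideanSpace ℂ (ι × n × m) where
  toFun X := WithLp.toLp 2 fun p => vec (X p.1) p.2
  map_add' X Y := by ext; simp
  map_smul' c X := by ext; simp

theorem norm_familyToEuclidean_sq (X : ι → Matrix m n ℂ) :
    ‖familyToEuclidean ι m n X‖ ^ 2 = (∑ i, ((X i)ᴴ * X i).trace).re := by
  simp only [Complex.re_sum, ← norm_toLp_vec_sq, EuclideanSpace.norm_sq_eq, Fintype.sum_prod_type]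
  rfl

theorem exists_isHermitian_forall_re_trace_mul_eq
    (φ : Module.Dual ℝ (selfAdjoint.submodule ℝ (Matrix n n ℂ))) :
    ∃ C : Matrix n n ℂ, C.IsHermitian ∧ ∀ X, φ X = (C * X).trace.re := by
  let B : LinearMap.BilinForm ℝ (selfAdjoint.submodule ℝ (Matrix n n ℂ)) :=
    ((LinearMap.mul ℝ (Matrix n n ℂ)).compl₁₂ (selfAdjoint.submodule ℝ _).subtype
      (selfAdjoint.submodule ℝ _).subtype).compr₂ (Complex.reLm ∘ₗ traceLinearMap n ℝ ℂ)
  have hB : ∀ X Y, B X Y = ((X : Matrix n n ℂ) * Y).trace.re := fun _ _ => rfl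
  have hBX : ∀ X, B X X = 0 → X = 0 := by
    intro X hX
    rw [hB] at hX
    nth_rw 1 [← X.2.star_eq] at hX
    rw [star_eq_conjTranspose, ← norm_toLp_vec_sq] at hX
    simpa using hX
  have hnd : B.Nondegenerate := ⟨fun X hX => hBX X (hX X), fun X hX => hBX X (hX X)⟩
  refine ⟨(B.toDual hnd).symm φ, ((B.toDual hnd).symm φ).2, fun X => ?_⟩
  rw [← hB, LinearMap.BilinForm.apply_toDual_symm_apply]

end Matrix

section Kraus

variable {d d' r : ℕ} (K Kd : Fin r → Matrix (Fin d') (Fin d) ℂ) (C : Matrix (Fin d) (Fin d) ℂ)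

noncomputable def krausGram : Matrix (Fin r) (Fin r) ℂ →ₗ[ℂ] Matrix (Fin d) (Fin d) ℂ where
  toFun h := ∑ i, ∑ j, h i j • ((K i)ᴴ * K j)
  map_add' a b := by simp [add_smul, Finset.sum_add_distrib]
  map_smul' c a := by simp [Finset.smul_sum, smul_smul]

theorem krausBeta_sub_krausBeta (h h' : Matrix (Fin r) (Fin r) ℂ) :
    krausBeta K Kd h - krausBeta K Kd h' = krausGram K (h - h') := by
  rw [map_sub]
  exact add_sub_add_left_eq_sub _ _ _

theorem isHermitian_krausGram {h : Matrix (Fin r) (Fin r) ℂ} (hh : h.IsHermitian) :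
    (krausGram K h).IsHermitian := by
  simp only [IsHermitian, krausGram, LinearMap.coe_mk, AddHom.coe_mk, conjTranspose_sum,
    conjTranspose_smul, conjTranspose_mul, conjTranspose_conjTranspose, hh.apply]
  exact Finset.sum_comm

noncomputable def krausShift :
    Matrix (Fin r) (Fin r) ℂ →ₗ[ℂ] (Fin r → Matrix (Fin d') (Fin d) ℂ) where
  toFun h i := ∑ j, (-Complex.I * h i j) • (K j * C)
  map_add' a b := by ext1 i; simp [mul_add, add_smul, Finset.sum_add_distrib]
  map_smul' c a := by ext1 i; simp [Finset.smul_sum, smul_smul, mul_left_comm]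

theorem re_trace_krausAlpha_eq_norm_sq (h : Matrix (Fin r) (Fin r) ℂ) :
    (Cᴴ * krausAlpha K Kd h * C).trace.re =
      ‖familyToEuclidean _ _ _ (fun i => Kd i * C) +
        familyToEuclidean _ _ _ (krausShift K C h)‖ ^ 2 := by
  rw [← map_add, norm_familyToEuclidean_sq, krausAlpha, Matrix.mul_sum, Matrix.sum_mul, trace_sum]
  refine congrArg Complex.re (Finset.sum_congr rfl fun i _ => congrArg trace ?_)
  have : (Kd i - Complex.I • ∑ j, h i j • K j) * C = Kd i * C + krausShift K C h i := by
    simp [krausShift, Matrix.add_mul, Matrix.neg_mul, Matrix.sum_mul, Matrix.smul_mul,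
      Finset.smul_sum, smul_smul, sub_eq_add_neg]
  rw [Pi.add_apply, ← this, conjTranspose_mul, Matrix.mul_assoc, Matrix.mul_assoc, Matrix.mul_assoc]

theorem exists_krausBeta_saddlePoint {h₀ : Matrix (Fin r) (Fin r) ℂ} (hh₀ : h₀.IsHermitian)
    (hβ₀ : krausBeta K Kd h₀ = 0) :
    ∃ h₁ : Matrix (Fin r) (Fin r) ℂ, h₁.IsHermitian ∧ krausBeta K Kd h₁ = 0 ∧
      ∃ Ct : Matrix (Fin d) (Fin d) ℂ, Ct.IsHermitian ∧
        ∀ h : Matrix (Fin r) (Fin r) ℂ, h.IsHermitian →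
          4 * (Cᴴ * krausAlpha K Kd h₁ * C).trace.re ≤
            4 * (Cᴴ * krausAlpha K Kd h * C).trace.re + (Ct * krausBeta K Kd h).trace.re := by
  let T := (((familyToEuclidean _ _ _).comp (krausShift K C)).restrictScalars ℝ).comp
    (selfAdjoint.submodule ℝ (Matrix (Fin r) (Fin r) ℂ)).subtype
  let Λ : selfAdjoint.submodule ℝ (Matrix (Fin r) (Fin r) ℂ) →ₗ[ℝ]
      selfAdjoint.submodule ℝ (Matrix (Fin d) (Fin d) ℂ) :=
    ((krausGram K).restrictScalars ℝ).restrict fun _ hh => isHermitian_krausGram K hh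
  obtain ⟨⟨h₁, hh₁⟩, hΛ, φ, hφ⟩ :=
    exists_lagrange_multiplier_norm_sq T Λ (familyToEuclidean _ _ _ (fun i => Kd i * C)) ⟨h₀, hh₀⟩
  obtain ⟨Ct, hCt, hCtφ⟩ := exists_isHermitian_forall_re_trace_mul_eq ((-4 : ℝ) • φ)
  have hβ : ∀ h (hh : h.IsHermitian), krausBeta K Kd h = (Λ ⟨h, hh⟩ - Λ ⟨h₀, hh₀⟩ : _) := by
    intro h hh
    rw [← sub_zero (krausBeta K Kd h), ← hβ₀, krausBeta_sub_krausBeta, map_sub]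
    rfl
  refine ⟨h₁, hh₁, by rw [hβ h₁ hh₁, hΛ, sub_self]; rfl, Ct, hCt, fun h hh => ?_⟩
  have hobj : ∀ h (hh : h.IsHermitian), 4 * (Cᴴ * krausAlpha K Kd h * C).trace.re =
      4 * ‖familyToEuclidean _ _ _ (fun i => Kd i * C) + T ⟨h, hh⟩‖ ^ 2 := fun h _ => by
    rw [re_trace_krausAlpha_eq_norm_sq]; rfl
  have hCtβ := hCtφ (Λ ⟨h, hh⟩ - Λ ⟨h₀, hh₀⟩)
  rw [← hβ h hh, LinearMap.smul_apply, smul_eq_mul] at hCtβ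
  rw [hobj h₁ hh₁, hobj h hh, ← hCtβ]
  linarith [hφ ⟨h, hh⟩]

end Kraus

theorem strong_duality_perturbation_code_general {d d' r : ℕ}
    (K Kd : Fin r → Matrix (Fin d') (Fin d) ℂ)
    (C : Matrix (Fin d) (Fin d) ℂ)
    (hfeas : ∃ h₀ : Matrix (Fin r) (Fin r) ℂ, h₀.IsHermitian ∧ krausBeta K Kd h₀ = 0) :
    sInf {x : ℝ | ∃ h : Matrix (Fin r) (Fin r) ℂ, h.IsHermitian ∧
        krausBeta K Kd h = 0 ∧
        x = 4 * ((Cᴴ * krausAlpha K Kd h * C).trace).re}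
      = sSup {x : ℝ | ∃ Ct : Matrix (Fin d) (Fin d) ℂ, Ct.IsHermitian ∧
          x = sInf {y : ℝ | ∃ h : Matrix (Fin r) (Fin r) ℂ, h.IsHermitian ∧
            y = 4 * ((Cᴴ * krausAlpha K Kd h * C).trace).re +
              ((Ct * krausBeta K Kd h).trace).re} } := by
  obtain ⟨h₀, hh₀, hβ₀⟩ := hfeas
  obtain ⟨h₁, hh₁, hβ₁, Ct, hCt, hsaddle⟩ := exists_krausBeta_saddlePoint K Kd C hh₀ hβ₀
  refine sInf_eq_sSup_sInf_of_saddlePoint ⟨hh₁, hβ₁⟩ hCt (fun c h hβ => ?_) hsaddle ?_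
  · simp [hβ]
  · rw [re_trace_krausAlpha_eq_norm_sq]
    positivity

/-- Strong Lagrangian duality for the constrained minimization
`inf { 4 Tr(C† α(h) C) : h Hermitian, β(h) = 0 }`, with Hermitian Lagrange
multiplier `C̃` for the affine constraint `β(h) = 0`; assuming the `r×r` matrix
`τ_{ij} = Tr(C† K_i† K_j C)` is positive definite and the constraint is feasible. -/
theorem strong_duality_perturbation_code {d d' r : ℕ}
    (K Kd : Fin r → Matrix (Fin d') (Fin d) ℂ)
    (hK : ∑ i, (K i)ᴴ * K i = 1)
    (hKd : ∑ i, ((Kd i)ᴴ * K i + (K i)ᴴ * Kd i) = 0)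
    (C : Matrix (Fin d) (Fin d) ℂ)
    (hτ : (Matrix.of fun i j : Fin r =>
        (Cᴴ * (K i)ᴴ * K j * C).trace).PosDef)
    (hfeas : ∃ h₀ : Matrix (Fin r) (Fin r) ℂ, h₀.IsHermitian ∧ krausBeta K Kd h₀ = 0) :
    sInf {x : ℝ | ∃ h : Matrix (Fin r) (Fin r) ℂ, h.IsHermitian ∧
        krausBeta K Kd h = 0 ∧
        x = 4 * ((Cᴴ * krausAlpha K Kd h * C).trace).re}
      = sSup {x : ℝ | ∃ Ct : Matrix (Fin d) (Fin d) ℂ, Ct.IsHermitian ∧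
          x = sInf {y : ℝ | ∃ h : Matrix (Fin r) (Fin r) ℂ, h.IsHermitian ∧
            y = 4 * ((Cᴴ * krausAlpha K Kd h * C).trace).re +
              ((Ct * krausBeta K Kd h).trace).re} } :=
  strong_duality_perturbation_code_general K Kd C hfeas
end

section
/- Let σ be an m×m positive definite Hermitian complex matrix with Tr σ = 1, and let A, B be m×m Hermitian matrices with Tr A = Tr B = 0. For a Hermitian X, let L[X] denote the unique Hermitian solution of the Lyapunov equation σ L + L σ = 2X. Assume 4 − Tr(L[B] B) > 0. Then for every Hermitian G the quantity 4 − 2 Tr(G B) + Tr(G² σ) − (Tr(G σ))² is strictly positive, and the supremum over m×m Hermitian matrices G of (Tr(G A))² / ( 4 − 2 Tr(G B) + Tr(G² σ) − (Tr(G σ))² ) equals Tr(L[A] A) + (Tr(L[A] B))² / ( 4 − Tr(L[B] B) ). -/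
open Matrix
open scoped ComplexOrder

namespace OptRecAux

variable {m : ℕ}

/-- The SLD-type bilinear form `τ(X,Y) = Re Tr(σ(XY+YX))/2`. -/
noncomputable def tau (σ X Y : Matrix (Fin m) (Fin m) ℂ) : ℝ :=
  ((σ * (X * Y + Y * X)).trace).re / 2

lemma tau_comm (σ X Y : Matrix (Fin m) (Fin m) ℂ) : tau σ X Y = tau σ Y X := by
  unfold tau; rw [add_comm]

lemma tau_add_left (σ X Z Y : Matrix (Fin m) (Fin m) ℂ) :
    tau σ (X + Z) Y = tau σ X Y + tau σ Z Y := by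
  unfold tau
  rw [show σ * ((X + Z) * Y + Y * (X + Z)) = σ * (X * Y + Y * X) + σ * (Z * Y + Y * Z) by
    noncomm_ring]
  rw [trace_add, Complex.add_re]; ring

lemma tau_sub_left (σ X Z Y : Matrix (Fin m) (Fin m) ℂ) :
    tau σ (X - Z) Y = tau σ X Y - tau σ Z Y := by
  unfold tau
  rw [show σ * ((X - Z) * Y + Y * (X - Z)) = σ * (X * Y + Y * X) - σ * (Z * Y + Y * Z) by
    noncomm_ring]
  rw [trace_sub, Complex.sub_re]; ring

lemma tau_smul_left (σ X Y : Matrix (Fin m) (Fin m) ℂ) (t : ℝ) :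
    tau σ ((t : ℂ) • X) Y = t * tau σ X Y := by
  unfold tau
  rw [show σ * ((t : ℂ) • X * Y + Y * ((t : ℂ) • X)) = (t : ℂ) • (σ * (X * Y + Y * X)) by
    rw [smul_mul_assoc, mul_smul_comm, ← smul_add, mul_smul_comm]]
  rw [trace_smul, smul_eq_mul, Complex.re_ofReal_mul]; ring

lemma tau_add_right (σ X Y Z : Matrix (Fin m) (Fin m) ℂ) :
    tau σ X (Y + Z) = tau σ X Y + tau σ X Z := by
  rw [tau_comm, tau_add_left, tau_comm σ Y, tau_comm σ Z]

lemma tau_sub_right (σ X Y Z : Matrix (Fin m) (Fin m) ℂ) :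
    tau σ X (Y - Z) = tau σ X Y - tau σ X Z := by
  rw [tau_comm, tau_sub_left, tau_comm σ Y, tau_comm σ Z]

lemma tau_smul_right (σ X Y : Matrix (Fin m) (Fin m) ℂ) (t : ℝ) :
    tau σ X ((t : ℂ) • Y) = t * tau σ X Y := by
  rw [tau_comm, tau_smul_left, tau_comm]

lemma trace_re_nonneg_of_posSemidef {M : Matrix (Fin m) (Fin m) ℂ} (hM : M.PosSemidef) :
    0 ≤ (M.trace).re := by
  have h : ∀ i, 0 ≤ (M i i).re := by
    intro i
    set v : Fin m → ℂ := Pi.single i 1 with hv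
    have := hM.re_dotProduct_nonneg v
    have hs : star v = v := by
      rw [hv]
      funext j
      by_cases h : j = i <;> simp [Pi.single_apply, h]
    rw [hs] at this
    have hd : v ⬝ᵥ M *ᵥ v = M i i := by
      rw [hv, Matrix.mulVec_single, single_dotProduct]
      simp
    rwa [hd] at this
  simpa [Matrix.trace, Matrix.diag, Complex.re_sum] using Finset.sum_nonneg fun i _ => h i

lemma tau_self_nonneg {σ : Matrix (Fin m) (Fin m) ℂ} (hσ : σ.PosDef)
    {X : Matrix (Fin m) (Fin m) ℂ} (hX : X.IsHermitian) : 0 ≤ tau σ X X := by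
  have h1 : tau σ X X = ((X * σ * Xᴴ).trace).re := by
    unfold tau
    rw [hX.eq]
    have ht : (σ * (X * X + X * X)).trace = 2 * (X * σ * X).trace := by
      rw [show σ * (X * X + X * X) = σ * X * X + σ * X * X by noncomm_ring, trace_add,
        trace_mul_cycle σ X X]
      ring
    rw [ht]
    simp [Complex.mul_re]
  rw [h1]
  exact trace_re_nonneg_of_posSemidef (hσ.posSemidef.mul_mul_conjTranspose_same X)


lemma isHermitian_real_smul {X : Matrix (Fin m) (Fin m) ℂ} (hX : X.IsHermitian) (t : ℝ) :
    ((t : ℂ) • X).IsHermitian := by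
  unfold Matrix.IsHermitian at *
  rw [conjTranspose_smul, hX]
  congr 1
  simp [Complex.star_def, Complex.conj_ofReal]

lemma tau_cs {σ : Matrix (Fin m) (Fin m) ℂ} (hσ : σ.PosDef)
    {X Y : Matrix (Fin m) (Fin m) ℂ} (hX : X.IsHermitian) (hY : Y.IsHermitian) :
    (tau σ X Y) ^ 2 ≤ tau σ X X * tau σ Y Y := by
  have key : ∀ t : ℝ, 0 ≤ tau σ Y Y * (t * t) + (2 * tau σ X Y) * t + tau σ X X := by
    intro t
    have h0 := tau_self_nonneg hσ (hX.add (isHermitian_real_smul hY t))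
    simp only [tau_add_left, tau_add_right, tau_smul_left, tau_smul_right] at h0
    rw [tau_comm σ Y X] at h0
    nlinarith [h0]
  have hd := discrim_le_zero key
  rw [discrim] at hd
  nlinarith [hd]

lemma trace_eq_tau (σ L Xm : Matrix (Fin m) (Fin m) ℂ)
    (hEq : σ * L + L * σ = (2 : ℂ) • Xm) (G : Matrix (Fin m) (Fin m) ℂ) :
    ((G * Xm).trace).re = tau σ G L := by
  have h3 : (G * (σ * L + L * σ)).trace = (G * ((2 : ℂ) • Xm)).trace := by rw [hEq]
  rw [show G * (σ * L + L * σ) = G * σ * L + G * L * σ by noncomm_ring,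
    trace_add, mul_smul_comm, trace_smul, smul_eq_mul] at h3
  unfold tau
  rw [show σ * (G * L + L * G) = σ * G * L + σ * L * G by noncomm_ring,
    trace_add, ← trace_mul_cycle G L σ, trace_mul_cycle σ L G]
  rw [show (G * L * σ).trace + (G * σ * L).trace = (G * σ * L).trace + (G * L * σ).trace
    from add_comm _ _, h3]
  simp [Complex.mul_re]

lemma tau_one_right (σ G : Matrix (Fin m) (Fin m) ℂ) :
    tau σ G 1 = ((G * σ).trace).re := by
  unfold tau
  rw [mul_one, one_mul, show σ * (G + G) = σ * G + σ * G by noncomm_ring, trace_add,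
    trace_mul_comm σ G]
  simp

lemma tau_self_eq (σ G : Matrix (Fin m) (Fin m) ℂ) :
    tau σ G G = ((G * G * σ).trace).re := by
  unfold tau
  rw [show σ * (G * G + G * G) = σ * (G * G) + σ * (G * G) by noncomm_ring, trace_add,
    trace_mul_comm σ (G * G), Matrix.mul_assoc]
  simp

lemma tau_L_one (σ L Xm : Matrix (Fin m) (Fin m) ℂ)
    (hEq : σ * L + L * σ = (2 : ℂ) • Xm) (hXtr : Xm.trace = 0) :
    tau σ L 1 = 0 := by
  have h3 := congrArg Matrix.trace hEq
  rw [trace_add, trace_smul, hXtr, smul_zero, trace_mul_comm L σ] at h3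
  rw [tau_one_right, trace_mul_comm L σ]
  have : (σ * L).trace = 0 := by
    have := h3
    linear_combination (1/2 : ℂ) * h3
  rw [this]
  simp

lemma tau_main {m : ℕ} (σ LA LB : Matrix (Fin m) (Fin m) ℂ) (hσ : σ.PosDef)
    (hσtr : σ.trace = 1) (hLA : LA.IsHermitian) (hLB : LB.IsHermitian)
    (hLA1 : tau σ LA 1 = 0) (hLB1 : tau σ LB 1 = 0)
    (hK : 0 < 4 - tau σ LB LB)
    (G : Matrix (Fin m) (Fin m) ℂ) (hG : G.IsHermitian) :
    0 < 4 - 2 * tau σ G LB + tau σ G G - (tau σ G 1) ^ 2 ∧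
    (tau σ G LA) ^ 2 ≤ (tau σ LA LA + (tau σ LA LB) ^ 2 / (4 - tau σ LB LB)) *
      (4 - 2 * tau σ G LB + tau σ G G - (tau σ G 1) ^ 2) := by
  have h11 : tau σ 1 1 = 1 := by
    rw [tau_one_right]; simp [hσtr]
  set s := tau σ LA LA with hs_def
  set c := tau σ LA LB with hc_def
  set q := tau σ LB LB with hq_def
  have hs0 : 0 ≤ s := by rw [hs_def]; exact tau_self_nonneg hσ hLA
  have hq0 : 0 ≤ q := by rw [hq_def]; exact tau_self_nonneg hσ hLB
  set u := tau σ G 1 with hu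
  set H := G - (u : ℂ) • (1 : Matrix (Fin m) (Fin m) ℂ) with hHd
  have hHh : H.IsHermitian := by
    rw [hHd]; exact hG.sub (isHermitian_real_smul isHermitian_one u)
  have hx : tau σ H LA = tau σ G LA := by
    rw [hHd, tau_sub_left, tau_smul_left, tau_comm σ 1 LA, hLA1]; ring
  have hy : tau σ H LB = tau σ G LB := by
    rw [hHd, tau_sub_left, tau_smul_left, tau_comm σ 1 LB, hLB1]; ring
  have hr : tau σ H H = tau σ G G - u ^ 2 := by
    rw [hHd]
    simp only [tau_sub_left, tau_sub_right, tau_smul_left, tau_smul_right]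
    rw [tau_comm σ 1 G, h11, ← hu]
    ring
  have hrnn : 0 ≤ tau σ H H := tau_self_nonneg hσ hHh
  have hcsA : (tau σ H LA) ^ 2 ≤ tau σ H H * s := by
    have h := tau_cs hσ hHh hLA
    rwa [← hs_def] at h
  have hcsB : (tau σ H LB) ^ 2 ≤ tau σ H H * q := by
    have h := tau_cs hσ hHh hLB
    rwa [← hq_def] at h
  have hf : 4 - 2 * tau σ G LB + tau σ G G - u ^ 2
      = 4 - 2 * tau σ H LB + tau σ H H := by
    rw [hy, hr]; ring
  constructor
  · rw [hf]
    by_cases hq' : q = 0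
    · rw [hq'] at hcsB
      nlinarith [hcsB, hrnn, sq_nonneg (tau σ H LB)]
    · have hqpos : 0 < q := lt_of_le_of_ne hq0 (Ne.symm hq')
      nlinarith [hcsB, hrnn, sq_nonneg (tau σ H LB - q), mul_pos hqpos hK]
  · rw [hf, ← hx]
    set V := s + c ^ 2 / (4 - q) with hVd
    have hV0 : 0 ≤ V := by
      have h2 : 0 ≤ c ^ 2 / (4 - q) := div_nonneg (sq_nonneg c) hK.le
      rw [hVd]; linarith
    by_cases hVz : V = 0
    · have hsz : s = 0 := by
        have h2 : 0 ≤ c ^ 2 / (4 - q) := div_nonneg (sq_nonneg c) hK.le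
        have h3 : s + c ^ 2 / (4 - q) = 0 := by rw [← hVd]; exact hVz
        linarith
      rw [hVz, zero_mul]
      rw [hsz, mul_zero] at hcsA
      exact hcsA
    · have hVpos : 0 < V := lt_of_le_of_ne hV0 (Ne.symm hVz)
      have hwh : (((V : ℝ) : ℂ) • (H - LB) - ((tau σ H LA : ℝ) : ℂ) • LA).IsHermitian :=
        (isHermitian_real_smul (hHh.sub hLB) V).sub (isHermitian_real_smul hLA (tau σ H LA))
      have hWnn := tau_self_nonneg hσ hwh
      simp only [tau_sub_left, tau_sub_right, tau_smul_left, tau_smul_right] at hWnn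
      rw [tau_comm σ LB H, tau_comm σ LA H, tau_comm σ LB LA, ← hs_def, ← hc_def, ← hq_def]
        at hWnn
      have hKW : 0 ≤ (4 - q) *
          (V * (V * (tau σ H H - tau σ H LB) - tau σ H LA * tau σ H LA -
            (V * (tau σ H LB - q) - tau σ H LA * c)) -
          tau σ H LA * (V * (tau σ H LA - c) - tau σ H LA * s)) :=
        mul_nonneg hK.le hWnn
      have hKV : (4 - q) * V = (4 - q) * s + c ^ 2 := by
        rw [hVd]
        field_simp
      have hid : (4 - q) * V *
            (V * (4 - 2 * tau σ H LB + tau σ H H) - (tau σ H LA) ^ 2)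
          = (4 - q) *
            (V * (V * (tau σ H H - tau σ H LB) - tau σ H LA * tau σ H LA -
              (V * (tau σ H LB - q) - tau σ H LA * c)) -
            tau σ H LA * (V * (tau σ H LA - c) - tau σ H LA * s))
            + (c * tau σ H LA - (4 - q) * V) ^ 2 := by
        linear_combination (tau σ H LA) ^ 2 * hKV
      have h1 : 0 ≤ (4 - q) * V *
          (V * (4 - 2 * tau σ H LB + tau σ H H) - (tau σ H LA) ^ 2) := by
        rw [hid]
        exact add_nonneg hKW (sq_nonneg _)
      have hT : 0 ≤ V * (4 - 2 * tau σ H LB + tau σ H H) - (tau σ H LA) ^ 2 :=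
        (mul_nonneg_iff_of_pos_left (mul_pos hK hVpos)).mp h1
      linarith [hT]


end OptRecAux


/-- Optimization of the recovery generator `G`: for positive definite `σ` with unit trace
and traceless Hermitian `A`, `B`, with `L[X]` the unique Hermitian solution of
`σL + Lσ = 2X`, and assuming `4 − Tr(L[B]B) > 0`, the denominator
`4 − 2Tr(GB) + Tr(G²σ) − (Tr(Gσ))²` is positive for every Hermitian `G`, and
`sup_G (Tr(GA))²/(4 − 2Tr(GB) + Tr(G²σ) − (Tr(Gσ))²) = Tr(L[A]A) + (Tr(L[A]B))²/(4 − Tr(L[B]B))`. -/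
theorem optimal_recovery_generator {m : ℕ}
    (σ A B LA LB : Matrix (Fin m) (Fin m) ℂ)
    (hσ : σ.PosDef) (hσtr : σ.trace = 1)
    (hA : A.IsHermitian) (hB : B.IsHermitian)
    (hAtr : A.trace = 0) (hBtr : B.trace = 0)
    (hLA : LA.IsHermitian) (hLAeq : σ * LA + LA * σ = (2 : ℂ) • A)
    (hLB : LB.IsHermitian) (hLBeq : σ * LB + LB * σ = (2 : ℂ) • B)
    (hpos : 0 < 4 - ((LB * B).trace).re) :
    (∀ G : Matrix (Fin m) (Fin m) ℂ, G.IsHermitian →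
      0 < 4 - 2 * ((G * B).trace).re + ((G * G * σ).trace).re - (((G * σ).trace).re) ^ 2)
    ∧ sSup {x : ℝ | ∃ G : Matrix (Fin m) (Fin m) ℂ, G.IsHermitian ∧
          x = (((G * A).trace).re) ^ 2 /
            (4 - 2 * ((G * B).trace).re + ((G * G * σ).trace).re - (((G * σ).trace).re) ^ 2)}
        = ((LA * A).trace).re + (((LA * B).trace).re) ^ 2 / (4 - ((LB * B).trace).re) := by
  have hLA1 : OptRecAux.tau σ LA 1 = 0 := OptRecAux.tau_L_one σ LA A hLAeq hAtr
  have hLB1 : OptRecAux.tau σ LB 1 = 0 := OptRecAux.tau_L_one σ LB B hLBeq hBtr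
  have hqeq : ((LB * B).trace).re = OptRecAux.tau σ LB LB :=
    OptRecAux.trace_eq_tau σ LB B hLBeq LB
  have hK : 0 < 4 - OptRecAux.tau σ LB LB := by rw [← hqeq]; exact hpos
  have hmain := fun G hG =>
    OptRecAux.tau_main σ LA LB hσ hσtr hLA hLB hLA1 hLB1 hK G hG
  have hden : ∀ G : Matrix (Fin m) (Fin m) ℂ,
      4 - 2 * ((G * B).trace).re + ((G * G * σ).trace).re - (((G * σ).trace).re) ^ 2
      = 4 - 2 * OptRecAux.tau σ G LB + OptRecAux.tau σ G G - (OptRecAux.tau σ G 1) ^ 2 := by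
    intro G
    rw [OptRecAux.trace_eq_tau σ LB B hLBeq G, OptRecAux.tau_self_eq, OptRecAux.tau_one_right]
  have hnum : ∀ G : Matrix (Fin m) (Fin m) ℂ, ((G * A).trace).re = OptRecAux.tau σ G LA :=
    OptRecAux.trace_eq_tau σ LA A hLAeq
  have hs0 : 0 ≤ OptRecAux.tau σ LA LA := OptRecAux.tau_self_nonneg hσ hLA
  constructor
  · intro G hG
    rw [hden G]
    exact (hmain G hG).1
  · have hRHS : ((LA * A).trace).re + (((LA * B).trace).re) ^ 2 / (4 - ((LB * B).trace).re)
        = OptRecAux.tau σ LA LA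
          + (OptRecAux.tau σ LA LB) ^ 2 / (4 - OptRecAux.tau σ LB LB) := by
      rw [OptRecAux.trace_eq_tau σ LA A hLAeq LA, OptRecAux.trace_eq_tau σ LB B hLBeq LA, hqeq]
    rw [hRHS]
    have hfam : ∀ t : ℝ,
        (OptRecAux.tau σ LA LB + t * OptRecAux.tau σ LA LA) ^ 2 /
          ((4 - OptRecAux.tau σ LB LB) + t ^ 2 * OptRecAux.tau σ LA LA)
        ∈ {x : ℝ | ∃ G : Matrix (Fin m) (Fin m) ℂ, G.IsHermitian ∧
          x = (((G * A).trace).re) ^ 2 /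
            (4 - 2 * ((G * B).trace).re + ((G * G * σ).trace).re - (((G * σ).trace).re) ^ 2)} := by
      intro t
      refine ⟨LB + (t : ℂ) • LA, hLB.add (OptRecAux.isHermitian_real_smul hLA t), ?_⟩
      rw [hden _, hnum _]
      have e1 : OptRecAux.tau σ (LB + (t : ℂ) • LA) LA
          = OptRecAux.tau σ LA LB + t * OptRecAux.tau σ LA LA := by
        rw [OptRecAux.tau_add_left, OptRecAux.tau_smul_left, OptRecAux.tau_comm σ LB LA]
      have e2 : OptRecAux.tau σ (LB + (t : ℂ) • LA) LB
          = OptRecAux.tau σ LB LB + t * OptRecAux.tau σ LA LB := by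
        rw [OptRecAux.tau_add_left, OptRecAux.tau_smul_left]
      have e3 : OptRecAux.tau σ (LB + (t : ℂ) • LA) (LB + (t : ℂ) • LA)
          = OptRecAux.tau σ LB LB + 2 * t * OptRecAux.tau σ LA LB
            + t ^ 2 * OptRecAux.tau σ LA LA := by
        simp only [OptRecAux.tau_add_left, OptRecAux.tau_add_right, OptRecAux.tau_smul_left,
          OptRecAux.tau_smul_right]
        rw [OptRecAux.tau_comm σ LB LA]
        ring
      have e4 : OptRecAux.tau σ (LB + (t : ℂ) • LA) 1 = 0 := by
        rw [OptRecAux.tau_add_left, OptRecAux.tau_smul_left, hLB1, hLA1]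
        ring
      rw [e1, e2, e3, e4]
      congr 1
      ring
    refine IsLUB.csSup_eq ⟨?_, ?_⟩ ⟨_, hfam 0⟩
    · rintro xv ⟨G, hG, rfl⟩
      rw [hden G, hnum G]
      have h1 := (hmain G hG).1
      have h2 := (hmain G hG).2
      rw [div_le_iff₀ h1]
      linarith [h2]
    · intro w hw
      have hwv : ∀ t : ℝ,
          (OptRecAux.tau σ LA LB + t * OptRecAux.tau σ LA LA) ^ 2 /
            ((4 - OptRecAux.tau σ LB LB) + t ^ 2 * OptRecAux.tau σ LA LA) ≤ w :=
        fun t => hw (hfam t)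
      have hw0 : 0 ≤ w := by
        have h0 := hwv 0
        have hd0 : 0 < (4 - OptRecAux.tau σ LB LB) + 0 ^ 2 * OptRecAux.tau σ LA LA := by
          rw [show (0:ℝ) ^ 2 * OptRecAux.tau σ LA LA = 0 by ring]
          linarith
        have : 0 ≤ (OptRecAux.tau σ LA LB + 0 * OptRecAux.tau σ LA LA) ^ 2 /
            ((4 - OptRecAux.tau σ LB LB) + 0 ^ 2 * OptRecAux.tau σ LA LA) :=
          div_nonneg (sq_nonneg _) hd0.le
        linarith
      by_cases hc0 : OptRecAux.tau σ LA LB = 0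
      · rw [hc0]
        rw [show (0:ℝ) ^ 2 / (4 - OptRecAux.tau σ LB LB) = 0 by
          rw [zero_pow (by norm_num), zero_div]]
        rw [add_zero]
        by_cases hsz : OptRecAux.tau σ LA LA = 0
        · rw [hsz]; exact hw0
        · have hspos : 0 < OptRecAux.tau σ LA LA := lt_of_le_of_ne hs0 (Ne.symm hsz)
          by_contra hlt
          push_neg at hlt
          set s := OptRecAux.tau σ LA LA
          set K := 4 - OptRecAux.tau σ LB LB
          set T := Real.sqrt (w * K / (s * (s - w)) + 1) with hT
          have hssw : 0 < s * (s - w) := mul_pos hspos (by linarith)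
          have hT2 : T ^ 2 = w * K / (s * (s - w)) + 1 := by
            rw [hT]
            exact Real.sq_sqrt (by positivity)
          have hT2' : T ^ 2 * (s * (s - w)) = w * K + s * (s - w) := by
            rw [hT2]
            field_simp
          have hdpos : 0 < K + T ^ 2 * s :=
            add_pos_of_pos_of_nonneg hK (mul_nonneg (sq_nonneg T) hs0)
          have hval := hwv T
          rw [hc0] at hval
          rw [div_le_iff₀ (by rw [show (0:ℝ) + T * s = T * s by ring] at *; exact hdpos)] at hval
          nlinarith [hval, hT2', hssw, hw0, hK]
      · have heq : (OptRecAux.tau σ LA LB + ((4 - OptRecAux.tau σ LB LB) /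
              OptRecAux.tau σ LA LB) * OptRecAux.tau σ LA LA) ^ 2 /
            ((4 - OptRecAux.tau σ LB LB) + ((4 - OptRecAux.tau σ LB LB) /
              OptRecAux.tau σ LA LB) ^ 2 * OptRecAux.tau σ LA LA)
            = OptRecAux.tau σ LA LA
              + (OptRecAux.tau σ LA LB) ^ 2 / (4 - OptRecAux.tau σ LB LB) := by
          set s := OptRecAux.tau σ LA LA
          set c := OptRecAux.tau σ LA LB
          set K := 4 - OptRecAux.tau σ LB LB with hKd
          have hcsq : 0 < c ^ 2 := by positivity
          have hden2 : K + (K / c) ^ 2 * s ≠ 0 := by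
            have h1 : 0 ≤ (K / c) ^ 2 * s := mul_nonneg (sq_nonneg _) hs0
            have : 0 < K + (K / c) ^ 2 * s := by linarith
            exact this.ne'
          field_simp
          ring
        rw [← heq]
        exact hwv _
end

section
/- Let u, v be orthonormal vectors in a finite-dimensional complex inner product space, let N be a positive integer, and let φ : ℝ → ℝ be differentiable at ω₀. Define ψ(ω) = (e^{−iNφ(ω)/2} u + e^{iNφ(ω)/2} v)/√2. Then ψ is differentiable at ω₀ and 4( ‖ψ'(ω₀)‖² − |⟨ψ(ω₀), ψ'(ω₀)⟩|² ) = N² φ'(ω₀)². -/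
open scoped InnerProductSpace ComplexConjugate

/-! With `θ = Nφ/2`, the state is `ψ = (e^{-iθ} u + e^{iθ} v)/√2` and its derivative is
`ψ' = iθ' (-e^{-iθ} u + e^{iθ} v)/√2`. Because the two coefficients of `ψ` have equal modulus,
`ψ'` is orthogonal to `ψ`, and by Pythagoras `‖ψ'‖² = θ'²`; hence the quantity is
`4θ'² = N²φ'²`. -/

section OrthonormalPair

variable {𝕜 E : Type*} [RCLike 𝕜] [NormedAddCommGroup E] [InnerProductSpace 𝕜 E]
  {u v : E}

theorem inner_smul_add_smul_of_orthonormal (hu : ‖u‖ = 1) (hv : ‖v‖ = 1) (huv : ⟪u, v⟫_𝕜 = 0)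
    (x y p q : 𝕜) :
    ⟪x • u + y • v, p • u + q • v⟫_𝕜 = conj x * p + conj y * q := by
  have hvu : ⟪v, u⟫_𝕜 = 0 := inner_eq_zero_symm.mp huv
  simp only [inner_add_left, inner_add_right, inner_smul_left, inner_smul_right,
    inner_self_eq_norm_sq_to_K, hu, hv, huv, hvu]
  push_cast
  ring

theorem norm_smul_add_smul_sq_of_orthonormal (hu : ‖u‖ = 1) (hv : ‖v‖ = 1)
    (huv : ⟪u, v⟫_𝕜 = 0) (x y : 𝕜) :
    ‖x • u + y • v‖ ^ 2 = ‖x‖ ^ 2 + ‖y‖ ^ 2 := by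
  rw [@norm_sq_eq_re_inner 𝕜, inner_smul_add_smul_of_orthonormal hu hv huv,
    RCLike.conj_mul, RCLike.conj_mul]
  norm_cast

theorem inner_smul_add_smul_neg_smul_add_smul_of_orthonormal (hu : ‖u‖ = 1) (hv : ‖v‖ = 1)
    (huv : ⟪u, v⟫_𝕜 = 0) (a b : 𝕜) :
    ⟪a • u + b • v, (-a) • u + b • v⟫_𝕜 = (‖b‖ : 𝕜) ^ 2 - (‖a‖ : 𝕜) ^ 2 := by
  rw [inner_smul_add_smul_of_orthonormal hu hv huv, mul_neg, RCLike.conj_mul, RCLike.conj_mul]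
  ring

end OrthonormalPair

theorem hasDerivAt_cexp_neg_mul_I_smul_add_cexp_mul_I_smul {E : Type*} [NormedAddCommGroup E]
    [NormedSpace ℂ E] (u v : E) {θ : ℝ → ℝ} {θ' ω₀ : ℝ} (hθ : HasDerivAt θ θ' ω₀) :
    HasDerivAt (fun ω => Complex.exp (-(θ ω * Complex.I)) • u + Complex.exp (θ ω * Complex.I) • v)
      ((θ' * Complex.I) • ((-Complex.exp (-(θ ω₀ * Complex.I))) • u +
        Complex.exp (θ ω₀ * Complex.I) • v)) ω₀ := by
  have hphase : HasDerivAt (fun ω => (θ ω : ℂ) * Complex.I) (θ' * Complex.I) ω₀ :=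
    hθ.ofReal_comp.mul_const _
  convert (hphase.fun_neg.cexp.smul_const u).fun_add (hphase.cexp.smul_const v) using 1
  module

theorem GHZ_pure_state_QFI_general {E : Type*} [NormedAddCommGroup E] [InnerProductSpace ℂ E]
    (u v : E) (hu : ‖u‖ = 1) (hv : ‖v‖ = 1) (huv : ⟪u, v⟫_ℂ = 0)
    (N : ℕ) (φ : ℝ → ℝ) (ω₀ : ℝ) (hφ : DifferentiableAt ℝ φ ω₀) :
    DifferentiableAt ℝ
      (fun ω => ((Real.sqrt 2)⁻¹ : ℝ) •
        (Complex.exp (-(Complex.I * N * φ ω / 2)) • u +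
          Complex.exp (Complex.I * N * φ ω / 2) • v)) ω₀ ∧
    4 * (‖deriv (fun ω => ((Real.sqrt 2)⁻¹ : ℝ) •
          (Complex.exp (-(Complex.I * N * φ ω / 2)) • u +
            Complex.exp (Complex.I * N * φ ω / 2) • v)) ω₀‖ ^ 2 -
        ‖⟪((Real.sqrt 2)⁻¹ : ℝ) •
            (Complex.exp (-(Complex.I * N * φ ω₀ / 2)) • u +
              Complex.exp (Complex.I * N * φ ω₀ / 2) • v),
          deriv (fun ω => ((Real.sqrt 2)⁻¹ : ℝ) •
            (Complex.exp (-(Complex.I * N * φ ω / 2)) • u +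
              Complex.exp (Complex.I * N * φ ω / 2) • v)) ω₀⟫_ℂ‖ ^ 2)
      = (N : ℝ) ^ 2 * (deriv φ ω₀) ^ 2 := by
  have hphase : ∀ ω, Complex.I * N * φ ω / 2 = ((N * φ ω / 2 : ℝ) : ℂ) * Complex.I :=
    fun ω => by push_cast; ring
  simp only [hphase]
  have hθ : HasDerivAt (fun ω => N * φ ω / 2) (N * deriv φ ω₀ / 2) ω₀ :=
    (hφ.hasDerivAt.const_mul _).div_const 2
  have hψ := (hasDerivAt_cexp_neg_mul_I_smul_add_cexp_mul_I_smul u v hθ).fun_const_smul (√2)⁻¹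
  refine ⟨hψ.differentiableAt, ?_⟩
  set θ₀ : ℝ := N * φ ω₀ / 2
  have ha : ‖Complex.exp (-(θ₀ * Complex.I))‖ = 1 := by
    rw [← neg_mul, ← Complex.ofReal_neg, Complex.norm_exp_ofReal_mul_I]
  have hb : ‖Complex.exp (θ₀ * Complex.I)‖ = 1 := Complex.norm_exp_ofReal_mul_I θ₀
  have horth : ⟪Complex.exp (-(θ₀ * Complex.I)) • u + Complex.exp (θ₀ * Complex.I) • v,
      (-Complex.exp (-(θ₀ * Complex.I))) • u + Complex.exp (θ₀ * Complex.I) • v⟫_ℂ = 0 := by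
    rw [inner_smul_add_smul_neg_smul_add_smul_of_orthonormal hu hv huv, ha, hb, sub_self]
  rw [hψ.deriv, RCLike.real_smul_eq_coe_smul (K := ℂ), RCLike.real_smul_eq_coe_smul (K := ℂ),
    inner_smul_left, inner_smul_right, inner_smul_right, horth, norm_smul, norm_smul, mul_pow,
    mul_pow, norm_smul_add_smul_sq_of_orthonormal hu hv huv, norm_neg, ha, hb]
  simp only [mul_zero, norm_zero, Complex.norm_mul, Complex.norm_I, Complex.norm_real,
    RCLike.norm_ofReal, Real.norm_eq_abs, mul_one, one_pow, sq_abs, inv_pow,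
    Real.sq_sqrt zero_le_two]
  ring

/-- GHZ-type state achieves quantum Fisher information `N²φ̇²`: for orthonormal `u, v` and
`ψ(ω) = (e^{−iNφ(ω)/2} u + e^{iNφ(ω)/2} v)/√2`, `ψ` is differentiable at `ω₀` and
`4(‖ψ'(ω₀)‖² − |⟨ψ(ω₀), ψ'(ω₀)⟩|²) = N² φ'(ω₀)²`. -/
theorem GHZ_pure_state_QFI {E : Type*} [NormedAddCommGroup E] [InnerProductSpace ℂ E]
    [FiniteDimensional ℂ E]
    (u v : E) (hu : ‖u‖ = 1) (hv : ‖v‖ = 1) (huv : ⟪u, v⟫_ℂ = 0)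
    (N : ℕ) (hN : 0 < N) (φ : ℝ → ℝ) (ω₀ : ℝ) (hφ : DifferentiableAt ℝ φ ω₀) :
    DifferentiableAt ℝ
      (fun ω => ((Real.sqrt 2)⁻¹ : ℝ) •
        (Complex.exp (-(Complex.I * N * φ ω / 2)) • u +
          Complex.exp (Complex.I * N * φ ω / 2) • v)) ω₀ ∧
    4 * (‖deriv (fun ω => ((Real.sqrt 2)⁻¹ : ℝ) •
          (Complex.exp (-(Complex.I * N * φ ω / 2)) • u +
            Complex.exp (Complex.I * N * φ ω / 2) • v)) ω₀‖ ^ 2 -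
        ‖⟪((Real.sqrt 2)⁻¹ : ℝ) •
            (Complex.exp (-(Complex.I * N * φ ω₀ / 2)) • u +
              Complex.exp (Complex.I * N * φ ω₀ / 2) • v),
          deriv (fun ω => ((Real.sqrt 2)⁻¹ : ℝ) •
            (Complex.exp (-(Complex.I * N * φ ω / 2)) • u +
              Complex.exp (Complex.I * N * φ ω / 2) • v)) ω₀⟫_ℂ‖ ^ 2)
      = (N : ℝ) ^ 2 * (deriv φ ω₀) ^ 2 :=
  GHZ_pure_state_QFI_general u v hu hv huv N φ ω₀ hφ
end
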